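/- (Correctness of the Dirichlet correction algorithm, part of Theorem 2.) Let α_D⁰, α_Dᵗ ∈ ℝ with α_D⁰ ≠ 0, let u₀ ∈ ℝᴺ satisfy u₀(0) = α_D⁰, and set β = α_Dᵗ/α_D⁰. Define ỹ ∈ ℝᴺ by ỹ(0) = 2·u₀(0) − (K·u₀)(0)/K₀₀ and ỹ(j) = u₀(j) for j ≠ 0, and define u ∈ ℝᴺ by u(0) = α_Dᵗ and u(i) = (K·ỹ)(i) for i ≠ 0. Then u = (T¹_D(β) · K · T²_D)·u₀; that is, the algorithm output using only matrix–vector products with K equals the boundary-corrected operator applied to u₀. -/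

import Mathlib

open Matrix Finset

/-- The matrix `T¹_D(β)`: entry (0,0) is `β/K₀₀`, diagonal entries 1 for rows `i ≠ 0`,
all other entries 0. -/
noncomputable def T1D {n : ℕ} (K : Matrix (Fin (n+2)) (Fin (n+2)) ℝ) (β : ℝ) :
    Matrix (Fin (n+2)) (Fin (n+2)) ℝ :=
  Matrix.of fun i j =>
    if i = 0 then (if j = 0 then β / K 0 0 else 0) else if i = j then 1 else 0

/-- The matrix `T²_D`: entry (0,0) is 1, entries (0,j) are `−K(0,j)/K₀₀` for `j ≠ 0`,
diagonal entries 1 for rows `i ≠ 0`, all other entries 0. -/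
noncomputable def T2D {n : ℕ} (K : Matrix (Fin (n+2)) (Fin (n+2)) ℝ) :
    Matrix (Fin (n+2)) (Fin (n+2)) ℝ :=
  Matrix.of fun i j =>
    if i = 0 then (if j = 0 then 1 else -K 0 j / K 0 0) else if i = j then 1 else 0

/-- correctness of the Dirichlet correction algorithm, Theorem 2. -/
theorem dirichlet_algorithm_correct {n : ℕ} (K : Matrix (Fin (n+2)) (Fin (n+2)) ℝ)
    (hK : K 0 0 ≠ 0) (αD0 αDt : ℝ) (hα : αD0 ≠ 0)
    (u₀ : Fin (n+2) → ℝ) (hu₀ : u₀ 0 = αD0)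
    (β : ℝ) (hβ : β = αDt / αD0)
    (ytil : Fin (n+2) → ℝ)
    (hy0 : ytil 0 = 2 * u₀ 0 - (K.mulVec u₀) 0 / K 0 0)
    (hyj : ∀ j, j ≠ 0 → ytil j = u₀ j)
    (u : Fin (n+2) → ℝ)
    (hu0 : u 0 = αDt)
    (hui : ∀ i, i ≠ 0 → u i = (K.mulVec ytil) i) :
    u = (T1D K β * K * T2D K).mulVec u₀ := by
  have hrow : ∀ (M : Matrix (Fin (n+2)) (Fin (n+2)) ℝ) (v : Fin (n+2) → ℝ)
      (i : Fin (n+2)), i ≠ 0 →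
      (∀ j, M i j = if i = j then 1 else 0) → M.mulVec v i = v i := by
    intro M v i hi hM
    simp only [Matrix.mulVec, dotProduct, hM]
    rw [Finset.sum_eq_single i]
    · simp
    · intro b _ hb; simp [Ne.symm hb]
    · simp
  have hT1 : ∀ (v : Fin (n+2) → ℝ) i, i ≠ 0 → (T1D K β).mulVec v i = v i := by
    intro v i hi
    exact hrow _ v i hi (fun j => by simp [T1D, hi])
  have hT2 : ∀ (v : Fin (n+2) → ℝ) i, i ≠ 0 → (T2D K).mulVec v i = v i := by
    intro v i hi
    exact hrow _ v i hi (fun j => by simp [T2D, hi])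
  have hT1_0 : ∀ (v : Fin (n+2) → ℝ), (T1D K β).mulVec v 0 = β / K 0 0 * v 0 := by
    intro v
    simp only [Matrix.mulVec, dotProduct, T1D, Matrix.of_apply]
    rw [Finset.sum_eq_single (0 : Fin (n+2))]
    · simp
    · intro b _ hb; simp [hb]
    · simp
  have key : (T2D K).mulVec u₀ = ytil := by
    funext i
    rcases eq_or_ne i 0 with rfl | hi
    · simp only [Matrix.mulVec, dotProduct, T2D, Matrix.of_apply]
      rw [Fin.sum_univ_succ]
      simp only [eq_self_iff_true, if_true, Fin.succ_ne_zero, if_false]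
      have hKu0 : (K.mulVec u₀) 0
          = K 0 0 * u₀ 0 + ∑ j : Fin (n+1), K 0 j.succ * u₀ j.succ := by
        simp only [Matrix.mulVec, dotProduct]
        rw [Fin.sum_univ_succ]
      have hsum : ∑ j : Fin (n+1), -K 0 j.succ / K 0 0 * u₀ j.succ
          = -((∑ j : Fin (n+1), K 0 j.succ * u₀ j.succ) / K 0 0) := by
        calc ∑ j : Fin (n+1), -K 0 j.succ / K 0 0 * u₀ j.succ
            = ∑ j : Fin (n+1), -(K 0 j.succ * u₀ j.succ / K 0 0) :=
              Finset.sum_congr rfl (fun j _ => by ring)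
          _ = -∑ j : Fin (n+1), K 0 j.succ * u₀ j.succ / K 0 0 :=
              Finset.sum_neg_distrib _
          _ = -((∑ j : Fin (n+1), K 0 j.succ * u₀ j.succ) / K 0 0) := by
              rw [Finset.sum_div]
      rw [hsum, hy0, hKu0]
      field_simp
      ring
    · rw [hyj i hi]
      exact hT2 u₀ i hi
  have hKy0 : (K.mulVec ytil) 0 = K 0 0 * u₀ 0 := by
    simp only [Matrix.mulVec, dotProduct]
    rw [Fin.sum_univ_succ, hy0]
    rw [Finset.sum_congr rfl (fun j _ => by rw [hyj _ (Fin.succ_ne_zero j)])]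
    rw [Matrix.mulVec, dotProduct, Fin.sum_univ_succ]
    field_simp
    ring
  rw [← Matrix.mulVec_mulVec, ← Matrix.mulVec_mulVec, key]
  funext i
  rcases eq_or_ne i 0 with rfl | hi
  · rw [hu0, hT1_0, hKy0, hβ, hu₀]
    field_simp
  · rw [hui i hi, hT1 _ i hi]
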